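/- arXiv:1109.6580 — 4 statements merged into one kernel-verified Lean document; each statement's English description precedes it below -/
import Mathlib

section
/- For every θ ∈ [0,1] and every integer n ≥ 1, if f^{(n-1)} is absolutely continuous on [a,b], then ∫_a^b f(x) dx = (b-a)[(1-θ) f((a+b)/2) + θ (f(a)+f(b))/2] + Σ_{i=1}^{⌊(n-1)/2⌋} [1-θ(2i+1)](b-a)^{2i+1} / ((2i+1)!·2^{2i}) · f^{(2i)}((a+b)/2) + (-1)^n ∫_a^b G_n(x) f^{(n)}(x) dx. -/
open MeasureTheory intervalIntegral

/-- The Peano kernel `G_n` from the paper (first branch on `[a,(a+b)/2]`,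
second branch on `((a+b)/2, b]`). -/
noncomputable def G (a b θ : ℝ) (n : ℕ) (x : ℝ) : ℝ :=
  if x ≤ (a + b) / 2 then
    (x - a) ^ (n - 1) / (n.factorial : ℝ) * (x - a - θ * n * (b - a) / 2)
  else
    (x - b) ^ (n - 1) / (n.factorial : ℝ) * (x - b + θ * n * (b - a) / 2)

/-- The quadrature functional `F_n`. -/
noncomputable def quadF (a b θ : ℝ) (n : ℕ) (f : ℝ → ℝ) : ℝ :=
  (b - a) * ((1 - θ) * f ((a + b) / 2) + θ * (f a + f b) / 2)
    + ∑ i ∈ Finset.Icc 1 ((n - 1) / 2),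
        (1 - θ * (2 * (i : ℝ) + 1)) * (b - a) ^ (2 * i + 1)
          / (((2 * i + 1).factorial : ℝ) * 2 ^ (2 * i)) * iteratedDeriv (2 * i) f ((a + b) / 2)

/-- `σ(g) = ∫ g² - (1/(b-a)) (∫ g)²`. -/
noncomputable def qsigma (a b : ℝ) (g : ℝ → ℝ) : ℝ :=
  (∫ x in a..b, (g x) ^ 2) - (1 / (b - a)) * (∫ x in a..b, g x) ^ 2

/-!
On each half of `[a, b]` the kernel `G_{k+1}` is a polynomial whose derivative is the
corresponding branch of `G_k`, so integrating by parts on the two halves turns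
`∫ G_{k+1} f^{(k+1)}` into `-∫ G_k f^{(k)}` plus `f^{(k)}((a+b)/2)` times the jump of `G_{k+1}`
at the midpoint; for `k ≥ 1` the endpoint terms vanish because `G_{k+1}` has a zero of order `k`
at `a` and at `b`. The jump is zero for even `k + 1` and otherwise equals the next coefficient
of the quadrature sum, so the formula follows by induction on `n`, starting from `n = 1`, where the
boundary terms of the single integration by parts are exactly the quadrature rule.
Integration by parts against the absolutely continuous `f^{(k)}` is
`AbsolutelyContinuousOnInterval.integral_mul_deriv_eq_deriv_mul`.
-/

open Set

section IntegrationByParts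

variable {u u' h v : ℝ → ℝ} {a b c : ℝ}

theorem continuousOn_of_eq_add_integral (hh : IntervalIntegrable h volume a b)
    (hv : ∀ x ∈ uIcc a b, v x = v a + ∫ t in a..x, h t) : ContinuousOn v (uIcc a b) :=
  (continuousOn_const.add (continuousOn_primitive_interval' hh left_mem_uIcc)).congr hv

theorem eq_add_integral_of_hasDerivAt (hv : ∀ x ∈ uIcc a b, HasDerivAt v (h x) x)
    (hh : IntervalIntegrable h volume a b) :
    ∀ x ∈ uIcc a b, v x = v a + ∫ t in a..x, h t := by
  intro x hx
  have hsub : uIcc a x ⊆ uIcc a b := uIcc_subset_uIcc_left hx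
  rw [integral_eq_sub_of_hasDerivAt (fun t ht => hv t (hsub ht)) (hh.mono_set hsub)]
  ring

theorem eq_add_integral_of_mem_uIcc (hh : IntervalIntegrable h volume a b)
    (hv : ∀ x ∈ uIcc a b, v x = v a + ∫ t in a..x, h t) (hc : c ∈ uIcc a b) :
    ∀ x ∈ uIcc a b, v x = v c + ∫ t in c..x, h t := by
  intro x hx
  have hac : IntervalIntegrable h volume a c := hh.mono_set (uIcc_subset_uIcc_left hc)
  have hcx : IntervalIntegrable h volume c x := hh.mono_set (uIcc_subset_uIcc hc hx)
  rw [hv x hx, hv c hc, ← integral_add_adjacent_intervals hac hcx, add_assoc]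

theorem integral_mul_eq_sub_of_eq_add_integral (hu : ∀ x, HasDerivAt u (u' x) x)
    (hu' : Continuous u') (hh : IntervalIntegrable h volume a b)
    (hv : ∀ x ∈ uIcc a b, v x = v a + ∫ t in a..x, h t) :
    ∫ x in a..b, u x * h x = u b * v b - u a * v a - ∫ x in a..b, u' x * v x := by
  set g : ℝ → ℝ := fun x => v a + ∫ t in a..x, h t
  have hderiv_u : deriv u = u' := funext fun x => (hu x).deriv
  have hu_ac : AbsolutelyContinuousOnInterval u a b :=
    (contDiff_one_iff_deriv.2 ⟨fun x => (hu x).differentiableAt, hderiv_u ▸ hu'⟩).contDiffOn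
      |>.absolutelyContinuousOnInterval
  have hg_ac : AbsolutelyContinuousOnInterval g a b :=
    contDiffOn_const.absolutelyContinuousOnInterval.fun_add
      (hh.absolutelyContinuousOnInterval_intervalIntegral left_mem_uIcc)
  have hderiv_g : ∀ᵐ x, x ∈ uIoc a b → u x * deriv g x = u x * h x := by
    filter_upwards [hh.ae_hasDerivAt_integral] with x hx hxI
    rw [((hx (uIoc_subset_uIcc hxI) a left_mem_uIcc).const_add (v a)).deriv]
  have hgv : EqOn g v (uIcc a b) := fun x hx => (hv x hx).symm
  calc ∫ x in a..b, u x * h x = ∫ x in a..b, u x * deriv g x :=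
        (integral_congr_ae hderiv_g).symm
    _ = u b * g b - u a * g a - ∫ x in a..b, deriv u x * g x :=
      hu_ac.integral_mul_deriv_eq_deriv_mul hg_ac
    _ = u b * v b - u a * v a - ∫ x in a..b, u' x * v x := by
      rw [hderiv_u, hgv left_mem_uIcc, hgv right_mem_uIcc,
        integral_congr fun x hx => congrArg (u' x * ·) (hgv hx)]

end IntegrationByParts

theorem integral_mul_eq_of_eqOn_Ioo {K K' uL uL' uR uR' h v : ℝ → ℝ} {a b c : ℝ}
    (hac : a ≤ c) (hcb : c ≤ b)
    (hKL : EqOn K uL (Ioo a c)) (hKR : EqOn K uR (Ioo c b))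
    (hK'L : EqOn K' uL' (Ioo a c)) (hK'R : EqOn K' uR' (Ioo c b))
    (huL : ∀ x, HasDerivAt uL (uL' x) x) (huL' : Continuous uL')
    (huR : ∀ x, HasDerivAt uR (uR' x) x) (huR' : Continuous uR')
    (hh : IntervalIntegrable h volume a b)
    (hv : ∀ x ∈ uIcc a b, v x = v a + ∫ t in a..x, h t) :
    ∫ x in a..b, K x * h x
      = uL c * v c - uL a * v a + (uR b * v b - uR c * v c) - ∫ x in a..b, K' x * v x := by
  have hc : c ∈ uIcc a b := by rw [uIcc_of_le (hac.trans hcb)]; exact ⟨hac, hcb⟩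
  have hsubL : uIcc a c ⊆ uIcc a b := uIcc_subset_uIcc_left hc
  have hsubR : uIcc c b ⊆ uIcc a b := uIcc_subset_uIcc hc right_mem_uIcc
  have hvc := continuousOn_of_eq_add_integral hh hv
  have hKhL : EqOn (fun x => K x * h x) (fun x => uL x * h x) (uIoo a c) := by
    rw [uIoo_of_le hac]; exact fun x hx => congrArg (· * h x) (hKL hx)
  have hKhR : EqOn (fun x => K x * h x) (fun x => uR x * h x) (uIoo c b) := by
    rw [uIoo_of_le hcb]; exact fun x hx => congrArg (· * h x) (hKR hx)
  have hKvL : EqOn (fun x => K' x * v x) (fun x => uL' x * v x) (uIoo a c) := by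
    rw [uIoo_of_le hac]; exact fun x hx => congrArg (· * v x) (hK'L hx)
  have hKvR : EqOn (fun x => K' x * v x) (fun x => uR' x * v x) (uIoo c b) := by
    rw [uIoo_of_le hcb]; exact fun x hx => congrArg (· * v x) (hK'R hx)
  have hcL : Continuous uL := continuous_iff_continuousAt.2 fun x => (huL x).continuousAt
  have hcR : Continuous uR := continuous_iff_continuousAt.2 fun x => (huR x).continuousAt
  have hKh_int_L : IntervalIntegrable (fun x => K x * h x) volume a c :=
    (intervalIntegrable_congr_uIoo hKhL).2 ((hh.mono_set hsubL).continuousOn_mul hcL.continuousOn)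
  have hKh_int_R : IntervalIntegrable (fun x => K x * h x) volume c b :=
    (intervalIntegrable_congr_uIoo hKhR).2 ((hh.mono_set hsubR).continuousOn_mul hcR.continuousOn)
  have hKv_int_L : IntervalIntegrable (fun x => K' x * v x) volume a c :=
    (intervalIntegrable_congr_uIoo hKvL).2
      (huL'.continuousOn.mul (hvc.mono hsubL)).intervalIntegrable
  have hKv_int_R : IntervalIntegrable (fun x => K' x * v x) volume c b :=
    (intervalIntegrable_congr_uIoo hKvR).2
      (huR'.continuousOn.mul (hvc.mono hsubR)).intervalIntegrable
  have ibpL := integral_mul_eq_sub_of_eq_add_integral huL huL' (hh.mono_set hsubL)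
    fun x hx => hv x (hsubL hx)
  have ibpR := integral_mul_eq_sub_of_eq_add_integral huR huR' (hh.mono_set hsubR)
    fun x hx => eq_add_integral_of_mem_uIcc hh hv hc x (hsubR hx)
  rw [← integral_add_adjacent_intervals hKh_int_L hKh_int_R,
    ← integral_add_adjacent_intervals hKv_int_L hKv_int_R, integral_congr_uIoo hKhL,
    integral_congr_uIoo hKhR, integral_congr_uIoo hKvL, integral_congr_uIoo hKvR, ibpL, ibpR]
  ring

/-- A branch of `G (m + 1)`, indexed by `m` to avoid the truncated `n - 1` of `G`. -/
noncomputable def peanoBranch (p s : ℝ) (m : ℕ) (x : ℝ) : ℝ :=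
  (x - p) ^ m / ((m + 1).factorial : ℝ) * (x - p + s * (m + 1))

section PeanoBranch

variable {p s : ℝ} {m : ℕ}

theorem continuous_peanoBranch : Continuous (peanoBranch p s m) := by
  unfold peanoBranch; fun_prop

theorem peanoBranch_zero (x : ℝ) : peanoBranch p s 0 x = x - p + s := by
  simp [peanoBranch]

theorem hasDerivAt_peanoBranch_zero (x : ℝ) : HasDerivAt (peanoBranch p s 0) 1 x := by
  rw [funext peanoBranch_zero]
  exact ((hasDerivAt_id x).sub_const p).add_const s

theorem hasDerivAt_peanoBranch_succ (x : ℝ) :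
    HasDerivAt (peanoBranch p s (m + 1)) (peanoBranch p s m x) x := by
  have hfun : peanoBranch p s (m + 1)
      = fun y => (y - p) ^ (m + 1) / ((m + 2).factorial : ℝ) * (y - p + s * (m + 2)) := by
    funext y; rw [peanoBranch]; push_cast; ring
  have hfact : ((m + 2).factorial : ℝ) = (m + 2) * (m + 1).factorial := by
    rw [Nat.factorial_succ]; push_cast; ring
  have hlin : HasDerivAt (fun y : ℝ => y - p) 1 x := (hasDerivAt_id x).sub_const p
  rw [hfun]
  refine (((hlin.fun_pow (m + 1)).div_const _).fun_mul (hlin.add_const _)).congr_deriv ?_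
  rw [peanoBranch, hfact]
  field_simp
  push_cast
  ring

end PeanoBranch

section Kernel

variable {a b θ x : ℝ} {m : ℕ}

theorem G_succ_of_le (hx : x ≤ (a + b) / 2) :
    G a b θ (m + 1) x = peanoBranch a (-(θ * (b - a) / 2)) m x := by
  rw [G, if_pos hx, peanoBranch, Nat.add_sub_cancel]
  push_cast
  ring

theorem G_succ_of_lt (hx : (a + b) / 2 < x) :
    G a b θ (m + 1) x = peanoBranch b (θ * (b - a) / 2) m x := by
  rw [G, if_neg hx.not_ge, peanoBranch, Nat.add_sub_cancel]
  push_cast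
  ring

end Kernel

section Recurrence

variable {a b θ : ℝ} {h v : ℝ → ℝ}

noncomputable def peanoJump (a b θ : ℝ) (m : ℕ) : ℝ :=
  (1 - (-1) ^ m) * (1 - θ * (m + 2)) * ((b - a) / 2) ^ (m + 2) / ((m + 2).factorial : ℝ)

theorem peanoBranch_sub_peanoBranch_midpoint (m : ℕ) :
    peanoBranch a (-(θ * (b - a) / 2)) (m + 1) ((a + b) / 2)
      - peanoBranch b (θ * (b - a) / 2) (m + 1) ((a + b) / 2) = peanoJump a b θ m := by
  have hL : (a + b) / 2 - a = (b - a) / 2 := by ring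
  have hR : (a + b) / 2 - b = -((b - a) / 2) := by ring
  rw [peanoBranch, peanoBranch, peanoJump, hL, hR, neg_pow]
  push_cast
  ring

theorem quadF_add_two (f : ℝ → ℝ) (m : ℕ) :
    quadF a b θ (m + 2) f + (-1) ^ m * peanoJump a b θ m * iteratedDeriv (m + 1) f ((a + b) / 2)
      = quadF a b θ (m + 1) f := by
  rcases Nat.even_or_odd' m with ⟨j, rfl | rfl⟩
  · have hidx₂ : (2 * j + 2 - 1) / 2 = j := by omega
    have hidx₁ : (2 * j + 1 - 1) / 2 = j := by omega
    rw [quadF, quadF, hidx₂, hidx₁, peanoJump, pow_mul, neg_one_sq, one_pow, sub_self]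
    ring
  · have hidx₂ : (2 * j + 1 + 2 - 1) / 2 = j + 1 := by omega
    have hidx₁ : (2 * j + 1 + 1 - 1) / 2 = j := by omega
    rw [quadF, quadF, hidx₂, hidx₁, Finset.sum_Icc_succ_top (by omega), peanoJump,
      show 2 * (j + 1) = 2 * j + 1 + 1 by ring, show 2 * j + 1 + 1 + 1 = 2 * j + 1 + 2 by ring]
    rw [div_pow, pow_succ (-1 : ℝ), pow_mul, neg_one_sq]
    push_cast
    field_simp
    ring

theorem quadF_one (f : ℝ → ℝ) :
    quadF a b θ 1 f = (b - a) * ((1 - θ) * f ((a + b) / 2) + θ * (f a + f b) / 2) := by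
  simp [quadF]

theorem integral_G_one_mul (hab : a ≤ b) (hh : IntervalIntegrable h volume a b)
    (hv : ∀ x ∈ uIcc a b, v x = v a + ∫ t in a..x, h t) :
    ∫ x in a..b, G a b θ 1 x * h x = quadF a b θ 1 v - ∫ x in a..b, v x := by
  rw [integral_mul_eq_of_eqOn_Ioo (by linarith) (by linarith) (K' := fun _ => 1)
    (fun x hx => G_succ_of_le hx.2.le) (fun x hx => G_succ_of_lt hx.1)
    (fun _ _ => rfl) (fun _ _ => rfl) hasDerivAt_peanoBranch_zero continuous_const
    hasDerivAt_peanoBranch_zero continuous_const hh hv]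
  simp only [peanoBranch_zero, quadF_one, one_mul]
  ring

theorem integral_G_add_two_mul (hab : a ≤ b) (m : ℕ) (hh : IntervalIntegrable h volume a b)
    (hv : ∀ x ∈ uIcc a b, v x = v a + ∫ t in a..x, h t) :
    ∫ x in a..b, G a b θ (m + 2) x * h x
      = peanoJump a b θ m * v ((a + b) / 2) - ∫ x in a..b, G a b θ (m + 1) x * v x := by
  rw [integral_mul_eq_of_eqOn_Ioo (by linarith) (by linarith)
    (fun x hx => G_succ_of_le hx.2.le) (fun x hx => G_succ_of_lt hx.1)
    (fun x hx => G_succ_of_le hx.2.le) (fun x hx => G_succ_of_lt hx.1)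
    hasDerivAt_peanoBranch_succ continuous_peanoBranch
    hasDerivAt_peanoBranch_succ continuous_peanoBranch hh hv,
    ← peanoBranch_sub_peanoBranch_midpoint]
  simp only [peanoBranch, sub_self, zero_pow (Nat.succ_ne_zero _), zero_div, zero_mul]
  ring

end Recurrence

theorem integral_eq_quadF_add_integral_G {a b θ : ℝ} {f : ℝ → ℝ} (hab : a ≤ b) (m : ℕ)
    (hd : ∀ k < m, ∀ x ∈ uIcc a b,
      HasDerivAt (iteratedDeriv k f) (iteratedDeriv (k + 1) f x) x)
    (hint : IntervalIntegrable (iteratedDeriv (m + 1) f) volume a b)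
    (hftc : ∀ x ∈ uIcc a b,
      iteratedDeriv m f x = iteratedDeriv m f a + ∫ t in a..x, iteratedDeriv (m + 1) f t) :
    ∫ x in a..b, f x
      = quadF a b θ (m + 1) f
        + (-1) ^ (m + 1) * ∫ x in a..b, G a b θ (m + 1) x * iteratedDeriv (m + 1) f x := by
  induction m with
  | zero =>
    rw [integral_G_one_mul hab hint hftc, iteratedDeriv_zero]
    ring
  | succ m ih =>
    have hint' : IntervalIntegrable (iteratedDeriv (m + 1) f) volume a b :=
      (continuousOn_of_eq_add_integral hint hftc).intervalIntegrable
    rw [ih (fun k hk => hd k (hk.trans m.lt_succ_self)) hint'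
      (eq_add_integral_of_hasDerivAt (hd m m.lt_succ_self) hint'),
      integral_G_add_two_mul hab m hint hftc, ← quadF_add_two]
    ring

theorem stmt0_general (a b θ : ℝ) (n : ℕ) (f : ℝ → ℝ)
    (hab : a < b) (hn : 1 ≤ n)
    (hd : ∀ k < n - 1, ∀ x ∈ Set.Icc a b,
      HasDerivAt (iteratedDeriv k f) (iteratedDeriv (k + 1) f x) x)
    (hint : IntervalIntegrable (iteratedDeriv n f) volume a b)
    (hftc : ∀ x ∈ Set.Icc a b,
      iteratedDeriv (n - 1) f x
        = iteratedDeriv (n - 1) f a + ∫ t in a..x, iteratedDeriv n f t)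
    :
    (∫ x in a..b, f x)
      = quadF a b θ n f + (-1 : ℝ) ^ n * ∫ x in a..b, G a b θ n x * iteratedDeriv n f x := by
  obtain ⟨m, rfl⟩ := Nat.exists_eq_add_of_le' hn
  rw [Nat.add_sub_cancel, ← uIcc_of_le hab.le] at hd hftc
  exact integral_eq_quadF_add_integral_G hab.le m hd hint hftc

theorem stmt0 (a b θ : ℝ) (n : ℕ) (f : ℝ → ℝ)
    (hab : a < b) (hθ : θ ∈ Set.Icc (0 : ℝ) 1) (hn : 1 ≤ n)
    (hd : ∀ k < n - 1, ∀ x ∈ Set.Icc a b,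
      HasDerivAt (iteratedDeriv k f) (iteratedDeriv (k + 1) f x) x)
    (hcont : ContinuousOn (iteratedDeriv (n - 1) f) (Set.Icc a b))
    (hint : IntervalIntegrable (iteratedDeriv n f) volume a b)
    (hftc : ∀ x ∈ Set.Icc a b,
      iteratedDeriv (n - 1) f x
        = iteratedDeriv (n - 1) f a + ∫ t in a..x, iteratedDeriv n f t)
    :
    (∫ x in a..b, f x)
      = quadF a b θ n f + (-1 : ℝ) ^ n * ∫ x in a..b, G a b θ n x * iteratedDeriv n f x :=
  stmt0_general a b θ n f hab hn hd hint hftc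
end

section
/- For every θ ∈ [0,1] and every integer n ≥ 1: if θn ≥ 1 then ∫_a^b |G_n(x)| dx = (b-a)^{n+1}/(n!·2^n) · (θ - 1/(n+1)); and if 0 ≤ θn < 1 then ∫_a^b |G_n(x)| dx = (b-a)^{n+1}/(n·(n+1)!·2^n) · [2(θn)^{n+1} - θn(n+1) + n]. -/
/-!
The reflection `x ↦ a + b - x` preserves `|G_n|`, so `∫ₐᵇ |G_n|` is twice the integral over the
left half, which the substitution `t = x - a` turns into `(1/n!) ∫₀ʰ |t^(n-1) (t - c)| dt` with
`h = (b-a)/2` and `c = θ n h`. The integrand changes sign only at `t = c`, so the two cases of the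
theorem are `h ≤ c` (no sign change on `[0, h]`) and `c < h`.
-/

open MeasureTheory intervalIntegral

lemma integral_pow_mul_sub_const (m : ℕ) (c u v : ℝ) :
    ∫ t in u..v, t ^ m * (t - c)
      = (v ^ (m + 2) - u ^ (m + 2)) / (m + 2) - c * (v ^ (m + 1) - u ^ (m + 1)) / (m + 1) := by
  have hsplit : ∀ t : ℝ, t ^ m * (t - c) = t ^ (m + 1) - c * t ^ m := fun t => by ring
  simp_rw [hsplit]
  rw [integral_sub (intervalIntegrable_pow _) ((intervalIntegrable_pow _).const_mul _),
    intervalIntegral.integral_const_mul, integral_pow, integral_pow]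
  push_cast
  ring

lemma integral_abs_pow_mul_sub_const_of_le (m : ℕ) {c h : ℝ} (hh : 0 ≤ h) (hhc : h ≤ c) :
    ∫ t in (0 : ℝ)..h, |t ^ m * (t - c)|
      = c * h ^ (m + 1) / (m + 1) - h ^ (m + 2) / (m + 2) := by
  have hneg : ∀ t ∈ Set.uIcc 0 h, |t ^ m * (t - c)| = -(t ^ m * (t - c)) := by
    intro t ht
    rw [Set.uIcc_of_le hh] at ht
    exact abs_of_nonpos (mul_nonpos_of_nonneg_of_nonpos (pow_nonneg ht.1 m) (by linarith [ht.2]))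
  rw [integral_congr hneg, intervalIntegral.integral_neg, integral_pow_mul_sub_const]
  field_simp
  ring

lemma integral_abs_pow_mul_sub_const_of_ge (m : ℕ) {c h : ℝ} (hc : 0 ≤ c) (hch : c ≤ h) :
    ∫ t in (0 : ℝ)..h, |t ^ m * (t - c)|
      = 2 * c ^ (m + 2) / ((m + 1) * (m + 2)) + h ^ (m + 2) / (m + 2)
        - c * h ^ (m + 1) / (m + 1) := by
  have hint : ∀ u v : ℝ, IntervalIntegrable (fun t => |t ^ m * (t - c)|) volume u v := fun u v =>
    ((continuous_pow m).mul (continuous_id.sub continuous_const)).abs.intervalIntegrable u v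
  have hpos : ∀ t ∈ Set.uIcc c h, |t ^ m * (t - c)| = t ^ m * (t - c) := by
    intro t ht
    rw [Set.uIcc_of_le hch] at ht
    exact abs_of_nonneg (mul_nonneg (pow_nonneg (hc.trans ht.1) m) (by linarith [ht.1]))
  rw [← integral_add_adjacent_intervals (hint 0 c) (hint c h),
    integral_abs_pow_mul_sub_const_of_le m hc le_rfl, integral_congr hpos,
    integral_pow_mul_sub_const]
  field_simp
  ring

section PeanoKernel

variable {a b θ : ℝ}

lemma G_succ_of_le_midpoint (m : ℕ) {x : ℝ} (hx : x ≤ (a + b) / 2) :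
    G a b θ (m + 1) x
      = (x - a) ^ m * (x - a - θ * (m + 1) * ((b - a) / 2)) / (m + 1).factorial := by
  simp only [G, if_pos hx, Nat.add_sub_cancel]
  push_cast
  ring

lemma abs_G_reflect (n : ℕ) {x : ℝ} (hx : x ≤ (a + b) / 2) :
    |G a b θ n (a + b - x)| = |G a b θ n x| := by
  by_cases hmid : a + b - x ≤ (a + b) / 2
  · rw [show a + b - x = x by linarith]
  · have hleft : a + b - x - b = -(x - a) := by ring
    have hright : -(x - a) + θ * n * (b - a) / 2 = -(x - a - θ * n * (b - a) / 2) := by ring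
    simp only [G, if_pos hx, if_neg hmid, hleft, hright, abs_mul, abs_div, abs_pow, abs_neg]

lemma intervalIntegrable_abs_G_left (n : ℕ) (hab : a ≤ b) :
    IntervalIntegrable (fun x => |G a b θ n x|) volume a ((a + b) / 2) := by
  refine ContinuousOn.intervalIntegrable (ContinuousOn.congr (f := fun x =>
    |(x - a) ^ (n - 1) / n.factorial * (x - a - θ * n * (b - a) / 2)|) (by fun_prop) ?_)
  intro x hx
  have hxmid : x ≤ (a + b) / 2 := (Set.uIcc_of_le (show a ≤ (a + b) / 2 by linarith) ▸ hx).2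
  simp only [G, if_pos hxmid]

lemma integral_abs_G_eq_two_mul_left (n : ℕ) (hab : a ≤ b) :
    ∫ x in a..b, |G a b θ n x| = 2 * ∫ x in a..(a + b) / 2, |G a b θ n x| := by
  have hreflect : ∀ x ∈ Set.uIcc ((a + b) / 2) b, |G a b θ n (a + b - x)| = |G a b θ n x| := by
    intro x hx
    rw [Set.uIcc_of_le (by linarith)] at hx
    simpa using (abs_G_reflect n (show a + b - x ≤ (a + b) / 2 by linarith [hx.1])).symm
  have hleft := intervalIntegrable_abs_G_left (θ := θ) n hab
  have hright : IntervalIntegrable (fun x => |G a b θ n x|) volume ((a + b) / 2) b := by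
    have h := (hleft.comp_sub_left (a + b)).symm
    rw [show a + b - (a + b) / 2 = (a + b) / 2 by ring, add_sub_cancel_left] at h
    exact h.congr fun x hx => hreflect x (Set.uIoc_subset_uIcc hx)
  rw [← integral_add_adjacent_intervals hleft hright, ← integral_congr hreflect,
    integral_comp_sub_left (fun x => |G a b θ n x|), add_sub_cancel_right,
    show a + b - (a + b) / 2 = (a + b) / 2 by ring, two_mul]

lemma integral_abs_G_succ_left (m : ℕ) (hab : a ≤ b) :
    ∫ x in a..(a + b) / 2, |G a b θ (m + 1) x|
      = (∫ t in (0 : ℝ)..(b - a) / 2, |t ^ m * (t - θ * (m + 1) * ((b - a) / 2))|)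
        / (m + 1).factorial := by
  have hG : ∀ x ∈ Set.uIcc a ((a + b) / 2), |G a b θ (m + 1) x|
      = |(x - a) ^ m * (x - a - θ * (m + 1) * ((b - a) / 2))| / (m + 1).factorial := by
    intro x hx
    rw [Set.uIcc_of_le (show a ≤ (a + b) / 2 by linarith)] at hx
    rw [G_succ_of_le_midpoint m hx.2, abs_div, Nat.abs_cast]
  rw [integral_congr hG, intervalIntegral.integral_div,
    integral_comp_sub_right (fun t => |t ^ m * (t - θ * (m + 1) * ((b - a) / 2))|), sub_self,
    show (a + b) / 2 - a = (b - a) / 2 by ring]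

end PeanoKernel

theorem stmt2 (a b θ : ℝ) (n : ℕ)
    (hab : a < b) (hθ : θ ∈ Set.Icc (0 : ℝ) 1) (hn : 1 ≤ n) :
    (1 ≤ θ * (n : ℝ) → (∫ x in a..b, |G a b θ n x|)
      = (b - a) ^ (n + 1) / ((n.factorial : ℝ) * 2 ^ n) * (θ - 1 / ((n : ℝ) + 1))) ∧
    (θ * (n : ℝ) < 1 → (∫ x in a..b, |G a b θ n x|)
      = (b - a) ^ (n + 1) / ((n : ℝ) * ((n + 1).factorial : ℝ) * 2 ^ n)
        * (2 * (θ * (n : ℝ)) ^ (n + 1) - θ * (n : ℝ) * ((n : ℝ) + 1) + (n : ℝ))) := by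
  obtain ⟨m, rfl⟩ : ∃ m, n = m + 1 := ⟨n - 1, (Nat.succ_pred_eq_of_pos hn).symm⟩
  rw [integral_abs_G_eq_two_mul_left _ hab.le, integral_abs_G_succ_left m hab.le]
  obtain ⟨h, hh⟩ : ∃ h, (b - a) / 2 = h := ⟨_, rfl⟩
  have hh0 : 0 < h := by linarith
  have hba : b - a = 2 * h := by linarith
  rw [hh, hba]
  push_cast
  have hfac : ((m + 1 + 1).factorial : ℝ) = (m + 2) * (m + 1).factorial := by
    push_cast [Nat.factorial_succ]; ring
  constructor
  · intro hθn
    rw [integral_abs_pow_mul_sub_const_of_le m hh0.le (by nlinarith)]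
    field_simp
    ring
  · intro hθn
    have hc : 0 ≤ θ * (m + 1) * h := mul_nonneg (mul_nonneg hθ.1 (by positivity)) hh0.le
    rw [integral_abs_pow_mul_sub_const_of_ge m hc (by nlinarith), hfac, mul_pow (θ * (m + 1)) h]
    field_simp
    ring
end

section
/- For every θ ∈ [0,1] and every integer n ≥ 1, the maximum of |G_n(x)| over x ∈ [a,b] equals: (θn-1)(b-a)^n/(n!·2^n) if θn > θ+1; θ^n (n-1)^{n-1} (b-a)^n/(n!·2^n) if 1 ≤ θn ≤ θ+1 and n > 1; max{1-θn, θ^n(n-1)^{n-1}} · (b-a)^n/(n!·2^n) if θn < 1 and n > 1; and max{1-θ, θ} · (b-a)/2 if n = 1. -/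
open MeasureTheory intervalIntegral

/-!
Measuring `x` from the nearer endpoint in units of `h = (b - a) / 2` gives
`|G_n(x)| = h ^ n / n! * u ^ k * |u - (k + 1) θ|` with `u ∈ [0, 1]` and `k = n - 1`, so
everything reduces to maximising this profile on `[0, 1]`. Below its root it equals
`u ^ k * ((k + 1) θ - u)`, which AM-GM, in the form `t ^ k * ((k + 1) s - k t) ≤ s ^ (k + 1)`,
bounds by its value `θ ^ (k + 1) * k ^ k` at the critical point `u = k θ`; when `k θ > 1` that
point lies beyond `1` and the same inequality shows the maximum is attained at `u = 1`. Above
the root the profile increases, so it is bounded by its value `1 - (k + 1) θ` at `u = 1`.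
The case `n = 1` is the case `k = 0` of the third formula, read with `0 ^ 0 = 1`.
-/

open Set
open scoped Nat

lemma pow_mul_sub_le_pow_succ {t s : ℝ} (ht : 0 ≤ t) (hs : 0 ≤ s) (k : ℕ) :
    t ^ k * ((k + 1) * s - k * t) ≤ s ^ (k + 1) := by
  induction k with
  | zero => simp
  | succ k ih =>
    push_cast
    have hstep : t ^ (k + 1) * ((k + 2) * s - (k + 1) * t) + (k + 1) * t ^ k * (s - t) ^ 2
        = s * (t ^ k * ((k + 1) * s - k * t)) := by ring
    have hsq : 0 ≤ (k + 1) * t ^ k * (s - t) ^ 2 := by positivity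
    calc t ^ (k + 1) * ((k + 1 + 1) * s - (k + 1) * t)
        ≤ s * (t ^ k * ((k + 1) * s - k * t)) := by linarith
      _ ≤ s * s ^ (k + 1) := mul_le_mul_of_nonneg_left ih hs
      _ = s ^ (k + 1 + 1) := by ring

lemma pow_mul_sub_le_pow_mul_pow {u s : ℝ} (hu : 0 ≤ u) (hs : 0 ≤ s) (k : ℕ) :
    u ^ k * ((k + 1) * s - u) ≤ s ^ (k + 1) * k ^ k := by
  rcases k.eq_zero_or_pos with rfl | hk
  · simpa using hu
  have hk : (0 : ℝ) < k := by exact_mod_cast hk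
  have h := pow_mul_sub_le_pow_succ (div_nonneg hu hk.le) hs k
  rw [mul_div_cancel₀ _ hk.ne', div_pow, div_mul_eq_mul_div, div_le_iff₀ (by positivity)] at h
  exact h

noncomputable def peanoProfile (k : ℕ) (s u : ℝ) : ℝ := u ^ k * |u - (k + 1) * s|

section

variable {k : ℕ} {s u : ℝ}

lemma peanoProfile_one : peanoProfile k s 1 = |1 - (k + 1) * s| := by simp [peanoProfile]

lemma peanoProfile_natCast_mul (hs : 0 ≤ s) :
    peanoProfile k s (k * s) = s ^ (k + 1) * k ^ k := by
  rw [peanoProfile, show (k : ℝ) * s - (k + 1) * s = -s by ring, abs_neg, abs_of_nonneg hs]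
  ring

lemma peanoProfile_le_of_le_succ_mul (hs : 0 ≤ s) (hu : 0 ≤ u) (hroot : u ≤ (k + 1) * s) :
    peanoProfile k s u ≤ s ^ (k + 1) * k ^ k := by
  rw [peanoProfile, abs_of_nonpos (by linarith), neg_sub]
  exact pow_mul_sub_le_pow_mul_pow hu hs k

lemma peanoProfile_le_of_succ_mul_le (hs : 0 ≤ s) (hroot : (k + 1) * s ≤ u) (hu1 : u ≤ 1) :
    peanoProfile k s u ≤ 1 - (k + 1) * s := by
  have hu : 0 ≤ u := le_trans (by positivity) hroot
  rw [peanoProfile, abs_of_nonneg (by linarith)]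
  calc u ^ k * (u - (k + 1) * s) ≤ 1 * (1 - (k + 1) * s) :=
        mul_le_mul (pow_le_one₀ hu hu1) (by linarith) (by linarith) zero_le_one
    _ = 1 - (k + 1) * s := one_mul _

lemma peanoProfile_le_of_one_le_mul (hks : 1 ≤ k * s) (hu : 0 ≤ u) (hu1 : u ≤ 1) :
    peanoProfile k s u ≤ (k + 1) * s - 1 := by
  have hk : (0 : ℝ) < k := by
    rcases k.eq_zero_or_pos with rfl | hk
    · norm_num at hks
    · exact_mod_cast hk
  have hs : 0 ≤ s := by nlinarith
  rw [peanoProfile, abs_of_nonpos (by nlinarith), neg_sub]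
  have hamgm := pow_mul_sub_le_pow_succ hu zero_le_one k
  rw [mul_one, one_pow] at hamgm
  have hpow : u ^ k ≤ 1 := pow_le_one₀ hu hu1
  have hscaled : k * (u ^ k * ((k + 1) * s - u)) ≤ k * ((k + 1) * s - 1) := by
    nlinarith [mul_nonneg (by positivity : (0 : ℝ) ≤ k + 1)
      (mul_nonneg (sub_nonneg.2 hks) (sub_nonneg.2 hpow))]
  exact le_of_mul_le_mul_left hscaled hk

lemma isGreatest_peanoProfile_of_one_le_mul (hks : 1 ≤ k * s) :
    IsGreatest (peanoProfile k s '' Icc 0 1) ((k + 1) * s - 1) := by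
  have hs : 0 ≤ s := by nlinarith [(Nat.cast_nonneg k : (0 : ℝ) ≤ k)]
  refine ⟨⟨1, right_mem_Icc.2 zero_le_one, ?_⟩, ?_⟩
  · rw [peanoProfile_one, abs_of_nonpos (by linarith), neg_sub]
  · rintro _ ⟨u, ⟨hu0, hu1⟩, rfl⟩
    exact peanoProfile_le_of_one_le_mul hks hu0 hu1

lemma isGreatest_peanoProfile_of_mul_le_one (hks : k * s ≤ 1) (hks' : 1 ≤ (k + 1) * s) :
    IsGreatest (peanoProfile k s '' Icc 0 1) (s ^ (k + 1) * k ^ k) := by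
  have hs : 0 ≤ s := by nlinarith [(Nat.cast_nonneg k : (0 : ℝ) ≤ k)]
  refine ⟨⟨k * s, ⟨by positivity, hks⟩, peanoProfile_natCast_mul hs⟩, ?_⟩
  rintro _ ⟨u, ⟨hu0, hu1⟩, rfl⟩
  exact peanoProfile_le_of_le_succ_mul hs hu0 (by linarith)

lemma isGreatest_peanoProfile_of_succ_mul_le_one (hs : 0 ≤ s) (hks : (k + 1) * s ≤ 1) :
    IsGreatest (peanoProfile k s '' Icc 0 1) (max (1 - (k + 1) * s) (s ^ (k + 1) * k ^ k)) := by
  refine ⟨?_, ?_⟩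
  · rcases le_total (s ^ (k + 1) * k ^ k) (1 - (k + 1) * s) with h | h
    · refine ⟨1, right_mem_Icc.2 zero_le_one, ?_⟩
      rw [max_eq_left h, peanoProfile_one, abs_of_nonneg (by linarith)]
    · refine ⟨k * s, ⟨by positivity, by linarith⟩, ?_⟩
      rw [max_eq_right h, peanoProfile_natCast_mul hs]
  · rintro _ ⟨u, ⟨hu0, hu1⟩, rfl⟩
    rcases le_total u ((k + 1) * s) with hroot | hroot
    · exact (peanoProfile_le_of_le_succ_mul hs hu0 hroot).trans (le_max_right _ _)
    · exact (peanoProfile_le_of_succ_mul_le hs hroot hu1).trans (le_max_left _ _)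

end

section

variable {a b : ℝ} (θ : ℝ) (k : ℕ)

lemma abs_G_add_mul (hab : a < b) {u : ℝ} (hu0 : 0 ≤ u) (hu1 : u ≤ 1) :
    |G a b θ (k + 1) (a + (b - a) / 2 * u)|
      = ((b - a) / 2) ^ (k + 1) / (k + 1)! * peanoProfile k θ u := by
  have hh : 0 < (b - a) / 2 := by linarith
  have : G a b θ (k + 1) (a + (b - a) / 2 * u)
      = ((b - a) / 2) ^ (k + 1) / (k + 1)! * (u ^ k * (u - (k + 1) * θ)) := by
    rw [G, if_pos (by nlinarith), add_sub_cancel_left, add_tsub_cancel_right, mul_pow]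
    push_cast
    ring
  rw [this, abs_mul, abs_of_nonneg (by positivity), peanoProfile, abs_mul,
    abs_of_nonneg (by positivity)]

lemma abs_G_sub_mul (hab : a < b) {u : ℝ} (hu0 : 0 ≤ u) (hu1 : u < 1) :
    |G a b θ (k + 1) (b - (b - a) / 2 * u)|
      = ((b - a) / 2) ^ (k + 1) / (k + 1)! * peanoProfile k θ u := by
  have hh : 0 < (b - a) / 2 := by linarith
  have : G a b θ (k + 1) (b - (b - a) / 2 * u)
      = (-1) ^ (k + 1)
          * (((b - a) / 2) ^ (k + 1) / (k + 1)! * (u ^ k * (u - (k + 1) * θ))) := by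
    rw [G, if_neg (by nlinarith), add_tsub_cancel_right,
      show b - (b - a) / 2 * u - b = -1 * ((b - a) / 2 * u) by ring, mul_pow, mul_pow]
    push_cast
    ring
  rw [this, abs_mul, abs_pow, abs_neg, abs_one, one_pow, one_mul, abs_mul,
    abs_of_nonneg (by positivity), peanoProfile, abs_mul, abs_of_nonneg (by positivity)]

lemma image_abs_G (hab : a < b) :
    (fun x => |G a b θ (k + 1) x|) '' Icc a b
      = (fun u => ((b - a) / 2) ^ (k + 1) / (k + 1)! * peanoProfile k θ u) '' Icc 0 1 := by
  have hh : 0 < (b - a) / 2 := by linarith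
  ext y
  constructor
  · rintro ⟨x, ⟨hax, hxb⟩, rfl⟩
    rcases le_or_gt x ((a + b) / 2) with hx | hx
    · have hu1 : (x - a) / ((b - a) / 2) ≤ 1 := (div_le_one hh).2 (by linarith)
      refine ⟨(x - a) / ((b - a) / 2), ⟨by positivity, hu1⟩, ?_⟩
      dsimp only
      rw [← abs_G_add_mul θ k hab (by positivity) hu1,
        mul_div_cancel₀ _ hh.ne', add_sub_cancel]
    · have hu1 : (b - x) / ((b - a) / 2) < 1 := (div_lt_one hh).2 (by linarith)
      refine ⟨(b - x) / ((b - a) / 2), ⟨by positivity, hu1.le⟩, ?_⟩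
      dsimp only
      rw [← abs_G_sub_mul θ k hab (by positivity) hu1,
        mul_div_cancel₀ _ hh.ne', sub_sub_cancel]
  · rintro ⟨u, ⟨hu0, hu1⟩, rfl⟩
    exact ⟨a + (b - a) / 2 * u, ⟨by nlinarith, by nlinarith⟩,
      abs_G_add_mul θ k hab hu0 hu1⟩

end

lemma isGreatest_abs_G_of_isGreatest_peanoProfile {a b θ M : ℝ} {k : ℕ} (hab : a < b)
    (hM : IsGreatest (peanoProfile k θ '' Icc 0 1) M) :
    IsGreatest ((fun x => |G a b θ (k + 1) x|) '' Icc a b)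
      (M * (b - a) ^ (k + 1) / ((k + 1)! * 2 ^ (k + 1))) := by
  have hC : 0 ≤ ((b - a) / 2) ^ (k + 1) / (k + 1)! := by
    have : 0 < b - a := sub_pos.2 hab
    positivity
  rw [image_abs_G θ k hab, ← image_image (fun v => ((b - a) / 2) ^ (k + 1) / (k + 1)! * v),
    show M * (b - a) ^ (k + 1) / ((k + 1)! * 2 ^ (k + 1))
      = ((b - a) / 2) ^ (k + 1) / (k + 1)! * M by rw [div_pow]; ring]
  exact (monotone_mul_left_of_nonneg hC).map_isGreatest hM

theorem stmt3_general (a b θ : ℝ) (n : ℕ)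
    (hab : a < b) (hθ : θ ∈ Set.Icc (0 : ℝ) 1) :
    (θ * (n : ℝ) > θ + 1 →
      IsGreatest ((fun x => |G a b θ n x|) '' Set.Icc a b)
        ((θ * (n : ℝ) - 1) * (b - a) ^ n / ((n.factorial : ℝ) * 2 ^ n))) ∧
    (1 ≤ θ * (n : ℝ) ∧ θ * (n : ℝ) ≤ θ + 1 ∧ 1 < n →
      IsGreatest ((fun x => |G a b θ n x|) '' Set.Icc a b)
        (θ ^ n * ((n : ℝ) - 1) ^ (n - 1) * (b - a) ^ n / ((n.factorial : ℝ) * 2 ^ n))) ∧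
    (θ * (n : ℝ) < 1 ∧ 1 < n →
      IsGreatest ((fun x => |G a b θ n x|) '' Set.Icc a b)
        (max (1 - θ * (n : ℝ)) (θ ^ n * ((n : ℝ) - 1) ^ (n - 1))
          * (b - a) ^ n / ((n.factorial : ℝ) * 2 ^ n))) ∧
    (n = 1 →
      IsGreatest ((fun x => |G a b θ n x|) '' Set.Icc a b)
        (max (1 - θ) θ * (b - a) / 2)) := by
  obtain ⟨hθ0, hθ1⟩ := hθ
  rcases n with _ | k
  · norm_num
    intro h
    linarith
  simp only [Nat.cast_add, Nat.cast_one, add_tsub_cancel_right, mul_comm θ,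
    Nat.lt_add_left_iff_pos]
  refine ⟨fun h => ?_, fun h => ?_, fun h => ?_, fun h => ?_⟩
  · exact isGreatest_abs_G_of_isGreatest_peanoProfile hab
      (isGreatest_peanoProfile_of_one_le_mul (by linarith))
  · exact isGreatest_abs_G_of_isGreatest_peanoProfile hab
      (isGreatest_peanoProfile_of_mul_le_one (by linarith) h.1)
  · exact isGreatest_abs_G_of_isGreatest_peanoProfile hab
      (isGreatest_peanoProfile_of_succ_mul_le_one hθ0 h.1.le)
  · cases h
    convert isGreatest_abs_G_of_isGreatest_peanoProfile hab
      (isGreatest_peanoProfile_of_succ_mul_le_one (k := 0) hθ0 (by simpa using hθ1)) using 1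
    simp

theorem stmt3 (a b θ : ℝ) (n : ℕ)
    (hab : a < b) (hθ : θ ∈ Set.Icc (0 : ℝ) 1) (hn : 1 ≤ n) :
    (θ * (n : ℝ) > θ + 1 →
      IsGreatest ((fun x => |G a b θ n x|) '' Set.Icc a b)
        ((θ * (n : ℝ) - 1) * (b - a) ^ n / ((n.factorial : ℝ) * 2 ^ n))) ∧
    (1 ≤ θ * (n : ℝ) ∧ θ * (n : ℝ) ≤ θ + 1 ∧ 1 < n →
      IsGreatest ((fun x => |G a b θ n x|) '' Set.Icc a b)
        (θ ^ n * ((n : ℝ) - 1) ^ (n - 1) * (b - a) ^ n / ((n.factorial : ℝ) * 2 ^ n))) ∧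
    (θ * (n : ℝ) < 1 ∧ 1 < n →
      IsGreatest ((fun x => |G a b θ n x|) '' Set.Icc a b)
        (max (1 - θ * (n : ℝ)) (θ ^ n * ((n : ℝ) - 1) ^ (n - 1))
          * (b - a) ^ n / ((n.factorial : ℝ) * 2 ^ n))) ∧
    (n = 1 →
      IsGreatest ((fun x => |G a b θ n x|) '' Set.Icc a b)
        (max (1 - θ) θ * (b - a) / 2)) :=
  stmt3_general a b θ n hab hθ
end

section
/- Let n ≥ 1 be an odd integer and suppose f^{(n)} is integrable on [a,b] with γ_n ≤ f^{(n)}(x) ≤ Γ_n for all x ∈ [a,b]. Then for every θ ∈ [0,1], |I - F_n| ≤ (Γ_n - γ_n)/2 · (b-a)^{n+1}/((n+1)!·2^n) · K, where K = θ(n+1) - 1 if θn ≥ 1, and K = 2θ^{n+1}n^n - θ(n+1) + 1 if 0 ≤ θn < 1. -/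
open MeasureTheory intervalIntegral

open Set
open scoped Nat

/-!
On `[a, m]` and `[m, b]`, `m = (a + b) / 2`, the kernel `G_n` is the polynomial
`P_k(x) = (x - r)^(k-1) / k! * (x - r - k d)` with `r = a`, resp. `r = b` and `d` replaced by `-d`,
where `d = θ (b - a) / 2`; these satisfy `P_(k+1)' = P_k`. Integrating `∫ P_k f^(k)` by parts
lowers `k` by one and produces the jump of `P_k` at `m`, which vanishes for even `k` and gives the
correction terms of `F_n` for odd `k`; at `k = 1` the boundary terms are exactly the
midpoint/trapezoid part of `F_n`. The last integration by parts is against the merely integrable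
`f^(n)`, so it goes through absolute continuity. This gives `F_n - I = ∫ G_n f^(n)`.

For odd `n` the jump of `P_(n+1)` vanishes, i.e. `∫ G_n = 0`, so `f^(n)` may be replaced by
`f^(n) - (γ + Γ) / 2`, which is bounded by `(Γ - γ) / 2`. The reflection `x ↦ a + b - x` maps one
half of the kernel to the other up to sign, so `|I - F_n| ≤ (Γ - γ) ∫_a^m |P_n|`. On `[a, m]` the
polynomial `P_n` changes sign only at `a + n d`, which lies before `m` exactly when `θ n < 1`;
the two resulting values of `∫_a^m |P_n|` are the two cases of `K`.
-/

theorem integral_mul_eq_sub_integral_deriv_mul {u u' v w : ℝ → ℝ} {α β : ℝ}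
    (hu : ∀ x, HasDerivAt u (u' x) x) (hu' : Continuous u')
    (hw : IntervalIntegrable w volume α β)
    (hv : ∀ x ∈ uIcc α β, v x = v α + ∫ t in α..x, w t) :
    ∫ x in α..β, u x * w x = u β * v β - u α * v α - ∫ x in α..β, u' x * v x := by
  set V : ℝ → ℝ := fun x ↦ v α + ∫ t in α..x, w t
  have hderiv_u : deriv u = u' := funext fun x ↦ (hu x).deriv
  have hu_ac : AbsolutelyContinuousOnInterval u α β :=
    (contDiff_one_iff_deriv.2 ⟨fun x ↦ (hu x).differentiableAt, hderiv_u ▸ hu'⟩).contDiffOn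
      |>.absolutelyContinuousOnInterval
  have hV_ac : AbsolutelyContinuousOnInterval V α β :=
    contDiffOn_const.absolutelyContinuousOnInterval.fun_add
      (hw.absolutelyContinuousOnInterval_intervalIntegral left_mem_uIcc)
  have hderiv_V : ∀ᵐ x, x ∈ uIoc α β → u x * deriv V x = u x * w x := by
    filter_upwards [hw.ae_hasDerivAt_integral] with x hx hxI
    rw [((hx (uIoc_subset_uIcc hxI) α left_mem_uIcc).const_add (v α)).deriv]
  have hVv : EqOn V v (uIcc α β) := fun x hx ↦ (hv x hx).symm
  calc ∫ x in α..β, u x * w x = ∫ x in α..β, u x * deriv V x := (integral_congr_ae hderiv_V).symm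
    _ = u β * V β - u α * V α - ∫ x in α..β, deriv u x * V x :=
      hu_ac.integral_mul_deriv_eq_deriv_mul hV_ac
    _ = u β * v β - u α * v α - ∫ x in α..β, u' x * v x := by
      rw [hVv right_mem_uIcc, hVv left_mem_uIcc, hderiv_u,
        integral_congr fun x hx ↦ congrArg (u' x * ·) (hVv hx)]

theorem integral_mul_eq_sub_integral_deriv_mul_of_mem_Icc {u u' v w : ℝ → ℝ} {a b α β : ℝ}
    (hα : α ∈ Icc a b) (hβ : β ∈ Icc a b)
    (hu : ∀ x, HasDerivAt u (u' x) x) (hu' : Continuous u')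
    (hw : IntervalIntegrable w volume a b)
    (hvw : ∀ x ∈ Icc a b, ∀ y ∈ Icc a b, v y = v x + ∫ t in x..y, w t) :
    ∫ x in α..β, u x * w x = u β * v β - u α * v α - ∫ x in α..β, u' x * v x :=
  integral_mul_eq_sub_integral_deriv_mul hu hu'
    (hw.mono_set ((uIcc_subset_Icc hα hβ).trans Icc_subset_uIcc))
    fun x hx ↦ hvw α hα x (uIcc_subset_Icc hα hβ hx)

theorem abs_integral_mul_le_mul_integral_abs {p g : ℝ → ℝ} {α β E : ℝ} (hαβ : α ≤ β)
    (hp : Continuous p) (hg : ∀ x ∈ Icc α β, |g x| ≤ E) :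
    |∫ x in α..β, p x * g x| ≤ E * ∫ x in α..β, |p x| := by
  rw [← intervalIntegral.integral_const_mul]
  refine (Real.norm_eq_abs _).ge.trans <| norm_integral_le_of_norm_le hαβ
    (Filter.Eventually.of_forall fun x hx ↦ ?_) ((hp.abs.intervalIntegrable α β).const_mul E)
  rw [Real.norm_eq_abs, abs_mul, mul_comm]
  exact mul_le_mul_of_nonneg_right (hg x (Ioc_subset_Icc_self hx)) (abs_nonneg _)

noncomputable def peanoKernel (r d : ℝ) (k : ℕ) (x : ℝ) : ℝ :=
  (x - r) ^ (k - 1) / k ! * (x - r - k * d)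

section PeanoKernel

variable (r d : ℝ) (k : ℕ)

theorem continuous_peanoKernel : Continuous (peanoKernel r d k) := by
  unfold peanoKernel; fun_prop

theorem peanoKernel_one : peanoKernel r d 1 = fun x ↦ x - r - d := by
  ext x; simp [peanoKernel]

theorem hasDerivAt_peanoKernel_one (x : ℝ) : HasDerivAt (peanoKernel r d 1) 1 x := by
  simpa only [peanoKernel_one] using ((hasDerivAt_id' x).sub_const r).sub_const d

theorem peanoKernel_succ_succ_self : peanoKernel r d (k + 2) r = 0 := by
  simp [peanoKernel]

theorem hasDerivAt_peanoKernel_succ_succ (x : ℝ) :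
    HasDerivAt (peanoKernel r d (k + 2)) (peanoKernel r d (k + 1) x) x := by
  have hP : peanoKernel r d (k + 2)
      = fun y ↦ (y - r) ^ (k + 1) / ((k + 2)! : ℝ) * (y - r - (k + 2 : ℕ) * d) := by
    ext y; simp [peanoKernel]
  rw [hP]
  refine ((((hasDerivAt_id x).sub_const r).fun_pow (k + 1)).div_const _
    |>.fun_mul (((hasDerivAt_id x).sub_const r).sub_const _)).congr_deriv ?_
  simp only [peanoKernel, Nat.add_sub_cancel, id, Nat.factorial_succ (k + 1)]
  push_cast
  field_simp
  ring

theorem integral_peanoKernel (α β : ℝ) :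
    ∫ x in α..β, peanoKernel r d (k + 1) x
      = peanoKernel r d (k + 2) β - peanoKernel r d (k + 2) α :=
  integral_eq_sub_of_hasDerivAt (fun x _ ↦ hasDerivAt_peanoKernel_succ_succ r d k x)
    ((continuous_peanoKernel r d _).intervalIntegrable α β)

theorem peanoKernel_reflect (s x : ℝ) :
    peanoKernel s (-d) (k + 1) (r + s - x) = (-1) ^ (k + 1) * peanoKernel r d (k + 1) x := by
  simp only [peanoKernel, Nat.add_sub_cancel]
  rw [show r + s - x - s = -1 * (x - r) by ring, mul_pow]
  ring

theorem integral_abs_peanoKernel_reflect (s α β : ℝ) :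
    ∫ x in α..β, |peanoKernel s (-d) (k + 1) x|
      = ∫ x in r + s - β..r + s - α, |peanoKernel r d (k + 1) x| := by
  rw [← integral_comp_sub_left]
  refine integral_congr fun x _ ↦ ?_
  have hrefl := peanoKernel_reflect r d k s (r + s - x)
  rw [sub_sub_cancel] at hrefl
  rw [hrefl, abs_mul, abs_pow, abs_neg, abs_one, one_pow, one_mul]

theorem peanoKernel_nonpos {x : ℝ} (hrx : r ≤ x) (hx : x - r ≤ (k + 1 : ℕ) * d) :
    peanoKernel r d (k + 1) x ≤ 0 :=
  mul_nonpos_of_nonneg_of_nonpos (by positivity [sub_nonneg.2 hrx]) (by linarith)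

theorem peanoKernel_nonneg {x : ℝ} (hrx : r ≤ x) (hx : (k + 1 : ℕ) * d ≤ x - r) :
    0 ≤ peanoKernel r d (k + 1) x :=
  mul_nonneg (by positivity [sub_nonneg.2 hrx]) (by linarith)

theorem integral_abs_peanoKernel_of_one_le {h θ : ℝ} (hh : 0 ≤ h) (hθ : 1 ≤ θ * (k + 1 : ℕ)) :
    ∫ x in r..r + h, |peanoKernel r (θ * h) (k + 1) x|
      = h ^ (k + 1 + 1) / ((k + 1 + 1)! : ℝ) * (θ * (((k + 1 : ℕ) : ℝ) + 1) - 1) := by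
  have hnonpos : ∀ x ∈ uIcc r (r + h), peanoKernel r (θ * h) (k + 1) x ≤ 0 := by
    intro x hx
    rw [uIcc_of_le (by linarith)] at hx
    exact peanoKernel_nonpos _ _ _ hx.1 (by nlinarith [hx.2])
  rw [integral_congr fun x hx ↦ abs_of_nonpos (hnonpos x hx), intervalIntegral.integral_neg,
    integral_peanoKernel, peanoKernel_succ_succ_self]
  simp only [peanoKernel, add_sub_cancel_left]
  push_cast
  ring

theorem integral_abs_peanoKernel_of_lt_one {h θ : ℝ} (hh : 0 ≤ h) (hθ₀ : 0 ≤ θ)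
    (hθ : θ * (k + 1 : ℕ) < 1) :
    ∫ x in r..r + h, |peanoKernel r (θ * h) (k + 1) x|
      = h ^ (k + 1 + 1) / ((k + 1 + 1)! : ℝ)
        * (2 * θ ^ (k + 1 + 1) * ((k + 1 : ℕ) : ℝ) ^ (k + 1)
          - θ * (((k + 1 : ℕ) : ℝ) + 1) + 1) := by
  set s := r + (k + 1 : ℕ) * (θ * h)
  have hrs : r ≤ s := le_add_of_nonneg_right (by positivity)
  have hsh : s ≤ r + h := by nlinarith
  have hP := continuous_peanoKernel r (θ * h) (k + 1)
  have hleft : ∫ x in r..s, |peanoKernel r (θ * h) (k + 1) x|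
      = -∫ x in r..s, peanoKernel r (θ * h) (k + 1) x := by
    rw [← intervalIntegral.integral_neg]
    refine integral_congr fun x hx ↦ ?_
    rw [uIcc_of_le hrs] at hx
    exact abs_of_nonpos (peanoKernel_nonpos _ _ _ hx.1 (by linarith [hx.2]))
  have hright : ∫ x in s..r + h, |peanoKernel r (θ * h) (k + 1) x|
      = ∫ x in s..r + h, peanoKernel r (θ * h) (k + 1) x := by
    refine integral_congr fun x hx ↦ ?_
    rw [uIcc_of_le hsh] at hx
    exact abs_of_nonneg (peanoKernel_nonneg _ _ _ (hrs.trans hx.1) (by linarith [hx.1]))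
  rw [← integral_add_adjacent_intervals (hP.abs.intervalIntegrable r s)
      (hP.abs.intervalIntegrable s (r + h)), hleft, hright, integral_peanoKernel,
    integral_peanoKernel, peanoKernel_succ_succ_self]
  simp only [s, peanoKernel, add_sub_cancel_left, mul_pow]
  push_cast
  ring

end PeanoKernel

section Midpoint

variable (a b : ℝ)

theorem peanoKernel_midpoint_sub (d : ℝ) (k : ℕ) :
    peanoKernel a d (k + 1) ((a + b) / 2) - peanoKernel b (-d) (k + 1) ((a + b) / 2)
      = (1 - (-1) ^ (k + 1)) * peanoKernel a d (k + 1) ((a + b) / 2) := by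
  have hrefl := peanoKernel_reflect a d k b ((a + b) / 2)
  rw [show a + b - (a + b) / 2 = (a + b) / 2 by ring] at hrefl
  rw [hrefl]
  ring

theorem peanoKernel_midpoint_sub_of_even (d : ℝ) (i : ℕ) :
    peanoKernel a d (2 * i + 2) ((a + b) / 2) - peanoKernel b (-d) (2 * i + 2) ((a + b) / 2)
      = 0 := by
  rw [peanoKernel_midpoint_sub, show 2 * i + 1 + 1 = 2 * (i + 1) by ring, pow_mul]
  simp

theorem peanoKernel_midpoint_sub_of_odd (θ : ℝ) (i : ℕ) :
    peanoKernel a (θ * (b - a) / 2) (2 * i + 1) ((a + b) / 2)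
        - peanoKernel b (-(θ * (b - a) / 2)) (2 * i + 1) ((a + b) / 2)
      = (1 - θ * (2 * (i : ℝ) + 1)) * (b - a) ^ (2 * i + 1)
          / (((2 * i + 1)! : ℝ) * 2 ^ (2 * i)) := by
  rw [peanoKernel_midpoint_sub, Odd.neg_one_pow ⟨i, rfl⟩]
  simp only [peanoKernel, Nat.add_sub_cancel]
  rw [show (a + b) / 2 - a = (b - a) / 2 by ring, div_pow]
  push_cast
  field_simp
  ring

end Midpoint

/-- With `m = (a + b) / 2` and `d = θ * (b - a) / 2`, `peanoPairing a b m d n g` is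
`∫ x in a..b, G a b θ n x * g x`. -/
noncomputable def peanoPairing (a b m d : ℝ) (k : ℕ) (g : ℝ → ℝ) : ℝ :=
  (∫ x in a..m, peanoKernel a d k x * g x) + ∫ x in m..b, peanoKernel b (-d) k x * g x

section Pairing

variable {a b m : ℝ} {v w : ℝ → ℝ}

theorem peanoPairing_one (d : ℝ) (ham : a ≤ m) (hmb : m ≤ b)
    (hv : IntervalIntegrable v volume a b) (hw : IntervalIntegrable w volume a b)
    (hvw : ∀ x ∈ Icc a b, ∀ y ∈ Icc a b, v y = v x + ∫ t in x..y, w t) :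
    peanoPairing a b m d 1 w = (b - a - 2 * d) * v m + d * (v a + v b) - ∫ x in a..b, v x := by
  have ha : a ∈ Icc a b := ⟨le_rfl, ham.trans hmb⟩
  have hb : b ∈ Icc a b := ⟨ham.trans hmb, le_rfl⟩
  have hm : m ∈ Icc a b := ⟨ham, hmb⟩
  have hibp (r e : ℝ) {α β : ℝ} (hα : α ∈ Icc a b) (hβ : β ∈ Icc a b) :=
    integral_mul_eq_sub_integral_deriv_mul_of_mem_Icc hα hβ (hasDerivAt_peanoKernel_one r e)
      continuous_const hw hvw
  rw [peanoPairing, hibp a d ha hm, hibp b (-d) hm hb, ← integral_add_adjacent_intervals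
    (hv.mono_set (uIcc_subset_uIcc_left (Icc_subset_uIcc hm)))
    (hv.mono_set (uIcc_subset_uIcc_right (Icc_subset_uIcc hm)))]
  simp only [peanoKernel_one, one_mul]
  ring

theorem peanoPairing_succ_succ (d : ℝ) (k : ℕ) (ham : a ≤ m) (hmb : m ≤ b)
    (hw : IntervalIntegrable w volume a b)
    (hvw : ∀ x ∈ Icc a b, ∀ y ∈ Icc a b, v y = v x + ∫ t in x..y, w t) :
    peanoPairing a b m d (k + 2) w
      = (peanoKernel a d (k + 2) m - peanoKernel b (-d) (k + 2) m) * v m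
        - peanoPairing a b m d (k + 1) v := by
  have ha : a ∈ Icc a b := ⟨le_rfl, ham.trans hmb⟩
  have hb : b ∈ Icc a b := ⟨ham.trans hmb, le_rfl⟩
  have hm : m ∈ Icc a b := ⟨ham, hmb⟩
  have hibp (r e : ℝ) {α β : ℝ} (hα : α ∈ Icc a b) (hβ : β ∈ Icc a b) :=
    integral_mul_eq_sub_integral_deriv_mul_of_mem_Icc hα hβ
      (hasDerivAt_peanoKernel_succ_succ r e k) (continuous_peanoKernel r e _) hw hvw
  rw [peanoPairing, peanoPairing, hibp a d ha hm, hibp b (-d) hm hb,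
    peanoKernel_succ_succ_self, peanoKernel_succ_succ_self]
  ring

theorem peanoPairing_midpoint_sub_const (d C : ℝ) (j : ℕ) {g : ℝ → ℝ} (hab : a ≤ b)
    (hg : IntervalIntegrable g volume a b) :
    peanoPairing a b ((a + b) / 2) d (2 * j + 1) (fun x ↦ g x - C)
      = peanoPairing a b ((a + b) / 2) d (2 * j + 1) g := by
  have hm : (a + b) / 2 ∈ uIcc a b := Icc_subset_uIcc ⟨by linarith, by linarith⟩
  have hsplit (r e α β : ℝ) (hαβ : IntervalIntegrable g volume α β) :
      ∫ x in α..β, peanoKernel r e (2 * j + 1) x * (g x - C)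
        = (∫ x in α..β, peanoKernel r e (2 * j + 1) x * g x)
          - C * (peanoKernel r e (2 * j + 2) β - peanoKernel r e (2 * j + 2) α) := by
    have hP := continuous_peanoKernel r e (2 * j + 1)
    simp_rw [mul_sub]
    rw [integral_sub (hαβ.continuousOn_mul hP.continuousOn)
      ((hP.intervalIntegrable α β).mul_const C), intervalIntegral.integral_mul_const,
      integral_peanoKernel]
    ring
  rw [peanoPairing, peanoPairing, hsplit _ _ _ _ (hg.mono_set (uIcc_subset_uIcc_left hm)),
    hsplit _ _ _ _ (hg.mono_set (uIcc_subset_uIcc_right hm)), peanoKernel_succ_succ_self,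
    peanoKernel_succ_succ_self]
  linear_combination -C * peanoKernel_midpoint_sub_of_even a b d j

theorem abs_peanoPairing_midpoint_le {E : ℝ} (d : ℝ) (k : ℕ) {g : ℝ → ℝ} (hab : a ≤ b)
    (hg : ∀ x ∈ Icc a b, |g x| ≤ E) :
    |peanoPairing a b ((a + b) / 2) d (k + 1) g|
      ≤ 2 * E * ∫ x in a..(a + b) / 2, |peanoKernel a d (k + 1) x| := by
  have ham : a ≤ (a + b) / 2 := by linarith
  have hmb : (a + b) / 2 ≤ b := by linarith
  have hright := integral_abs_peanoKernel_reflect a d k b ((a + b) / 2) b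
  rw [show a + b - b = a by ring, show a + b - (a + b) / 2 = (a + b) / 2 by ring] at hright
  calc |peanoPairing a b ((a + b) / 2) d (k + 1) g|
      ≤ E * (∫ x in a..(a + b) / 2, |peanoKernel a d (k + 1) x|)
        + E * ∫ x in (a + b) / 2..b, |peanoKernel b (-d) (k + 1) x| :=
        (abs_add_le _ _).trans <| add_le_add
          (abs_integral_mul_le_mul_integral_abs ham (continuous_peanoKernel _ _ _)
            fun x hx ↦ hg x ⟨hx.1, hx.2.trans hmb⟩)
          (abs_integral_mul_le_mul_integral_abs hmb (continuous_peanoKernel _ _ _)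
            fun x hx ↦ hg x ⟨ham.trans hx.1, hx.2⟩)
    _ = 2 * E * ∫ x in a..(a + b) / 2, |peanoKernel a d (k + 1) x| := by rw [hright]; ring

end Pairing

theorem quadF_two_mul_succ_add_one (a b θ : ℝ) (j : ℕ) (f : ℝ → ℝ) :
    quadF a b θ (2 * (j + 1) + 1) f = quadF a b θ (2 * j + 1) f
      + (1 - θ * (2 * ((j + 1 : ℕ) : ℝ) + 1)) * (b - a) ^ (2 * (j + 1) + 1)
          / (((2 * (j + 1) + 1)! : ℝ) * 2 ^ (2 * (j + 1)))
          * iteratedDeriv (2 * (j + 1)) f ((a + b) / 2) := by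
  rw [quadF, quadF, show (2 * (j + 1) + 1 - 1) / 2 = j + 1 by omega,
    show (2 * j + 1 - 1) / 2 = j by omega, Finset.sum_Icc_succ_top (by omega : 1 ≤ j + 1)]
  ring

theorem peanoPairing_midpoint_eq_quadF_sub_integral {a b : ℝ} (θ : ℝ) (f : ℝ → ℝ) (j : ℕ)
    (hab : a ≤ b)
    (hint : ∀ k ≤ 2 * j + 1, IntervalIntegrable (iteratedDeriv k f) volume a b)
    (hftc : ∀ k < 2 * j + 1, ∀ x ∈ Icc a b, ∀ y ∈ Icc a b,
      iteratedDeriv k f y = iteratedDeriv k f x + ∫ t in x..y, iteratedDeriv (k + 1) f t) :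
    peanoPairing a b ((a + b) / 2) (θ * (b - a) / 2) (2 * j + 1) (iteratedDeriv (2 * j + 1) f)
      = quadF a b θ (2 * j + 1) f - ∫ x in a..b, f x := by
  have ham : a ≤ (a + b) / 2 := by linarith
  have hmb : (a + b) / 2 ≤ b := by linarith
  induction j with
  | zero =>
    rw [peanoPairing_one _ ham hmb (hint 0 (by omega)) (hint 1 le_rfl) (hftc 0 (by omega)), quadF,
      Finset.Icc_eq_empty_of_lt (show (2 * 0 + 1 - 1) / 2 < 1 by omega), Finset.sum_empty]
    simp only [iteratedDeriv_zero]
    ring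
  | succ j ih =>
    set m := (a + b) / 2
    set d := θ * (b - a) / 2
    calc peanoPairing a b m d (2 * (j + 1) + 1) (iteratedDeriv (2 * (j + 1) + 1) f)
        = (peanoKernel a d (2 * (j + 1) + 1) m - peanoKernel b (-d) (2 * (j + 1) + 1) m)
            * iteratedDeriv (2 * (j + 1)) f m
          - peanoPairing a b m d (2 * j + 2) (iteratedDeriv (2 * j + 2) f) :=
          peanoPairing_succ_succ _ _ ham hmb (hint _ le_rfl) (hftc (2 * j + 2) (by omega))
      _ = (peanoKernel a d (2 * (j + 1) + 1) m - peanoKernel b (-d) (2 * (j + 1) + 1) m)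
            * iteratedDeriv (2 * (j + 1)) f m
          + peanoPairing a b m d (2 * j + 1) (iteratedDeriv (2 * j + 1) f) := by
          rw [peanoPairing_succ_succ _ _ ham hmb (hint _ (by omega)) (hftc (2 * j + 1) (by omega)),
            peanoKernel_midpoint_sub_of_even]
          ring
      _ = quadF a b θ (2 * (j + 1) + 1) f - ∫ x in a..b, f x := by
          rw [ih (fun k hk ↦ hint k (by omega)) (fun k hk ↦ hftc k (by omega)),
            quadF_two_mul_succ_add_one, peanoKernel_midpoint_sub_of_odd a b θ (j + 1)]
          ring

section IteratedDeriv

variable {f : ℝ → ℝ} {a b : ℝ} {n : ℕ}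

theorem continuousOn_iteratedDeriv_of_lt
    (hd : ∀ k < n - 1, ∀ x ∈ Icc a b,
      HasDerivAt (iteratedDeriv k f) (iteratedDeriv (k + 1) f x) x)
    (hcont : ContinuousOn (iteratedDeriv (n - 1) f) (Icc a b)) {k : ℕ} (hk : k < n) :
    ContinuousOn (iteratedDeriv k f) (Icc a b) := by
  rcases (Nat.le_sub_one_of_lt hk).lt_or_eq with hk' | rfl
  · exact fun x hx ↦ (hd k hk' x hx).continuousAt.continuousWithinAt
  · exact hcont

theorem intervalIntegrable_iteratedDeriv_of_le (hab : a ≤ b)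
    (hd : ∀ k < n - 1, ∀ x ∈ Icc a b,
      HasDerivAt (iteratedDeriv k f) (iteratedDeriv (k + 1) f x) x)
    (hcont : ContinuousOn (iteratedDeriv (n - 1) f) (Icc a b))
    (hint : IntervalIntegrable (iteratedDeriv n f) volume a b) {k : ℕ} (hk : k ≤ n) :
    IntervalIntegrable (iteratedDeriv k f) volume a b := by
  rcases hk.lt_or_eq with hk' | rfl
  · exact (continuousOn_iteratedDeriv_of_lt hd hcont hk').intervalIntegrable_of_Icc hab
  · exact hint

theorem iteratedDeriv_eq_add_integral (hab : a ≤ b)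
    (hd : ∀ k < n - 1, ∀ x ∈ Icc a b,
      HasDerivAt (iteratedDeriv k f) (iteratedDeriv (k + 1) f x) x)
    (hcont : ContinuousOn (iteratedDeriv (n - 1) f) (Icc a b))
    (hint : IntervalIntegrable (iteratedDeriv n f) volume a b)
    (hftc : ∀ x ∈ Icc a b,
      iteratedDeriv (n - 1) f x = iteratedDeriv (n - 1) f a + ∫ t in a..x, iteratedDeriv n f t)
    {k : ℕ} (hk : k < n) {x y : ℝ} (hx : x ∈ Icc a b) (hy : y ∈ Icc a b) :
    iteratedDeriv k f y = iteratedDeriv k f x + ∫ t in x..y, iteratedDeriv (k + 1) f t := by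
  have hint' : IntervalIntegrable (iteratedDeriv (k + 1) f) volume x y :=
    (intervalIntegrable_iteratedDeriv_of_le hab hd hcont hint hk).mono_set
      ((uIcc_subset_Icc hx hy).trans Icc_subset_uIcc)
  rcases (Nat.le_sub_one_of_lt hk).lt_or_eq with hk' | rfl
  · rw [integral_eq_sub_of_hasDerivAt (fun t ht ↦ hd k hk' t (uIcc_subset_Icc hx hy ht)) hint']
    ring
  · rw [Nat.sub_add_cancel (by omega)] at hint' ⊢
    rw [hftc y hy, hftc x hx, ← integral_add_adjacent_intervals
      (hint.mono_set (uIcc_subset_uIcc_left (Icc_subset_uIcc hx))) hint']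
    ring

end IteratedDeriv

theorem stmt9_general (a b θ : ℝ) (n : ℕ) (f : ℝ → ℝ) (γ Γ : ℝ)
    (hab : a < b) (hθ : θ ∈ Set.Icc (0 : ℝ) 1) (hodd : Odd n)
    (hd : ∀ k < n - 1, ∀ x ∈ Set.Icc a b,
      HasDerivAt (iteratedDeriv k f) (iteratedDeriv (k + 1) f x) x)
    (hcont : ContinuousOn (iteratedDeriv (n - 1) f) (Set.Icc a b))
    (hint : IntervalIntegrable (iteratedDeriv n f) volume a b)
    (hftc : ∀ x ∈ Set.Icc a b,
      iteratedDeriv (n - 1) f x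
        = iteratedDeriv (n - 1) f a + ∫ t in a..x, iteratedDeriv n f t)
    (hγ : ∀ x ∈ Set.Icc a b, γ ≤ iteratedDeriv n f x)
    (hΓ : ∀ x ∈ Set.Icc a b, iteratedDeriv n f x ≤ Γ) :
    (1 ≤ θ * (n : ℝ) →
      |(∫ x in a..b, f x) - quadF a b θ n f|
        ≤ (Γ - γ) / 2 * ((b - a) ^ (n + 1) / (((n + 1).factorial : ℝ) * 2 ^ n))
          * (θ * ((n : ℝ) + 1) - 1)) ∧
    (θ * (n : ℝ) < 1 →
      |(∫ x in a..b, f x) - quadF a b θ n f|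
        ≤ (Γ - γ) / 2 * ((b - a) ^ (n + 1) / (((n + 1).factorial : ℝ) * 2 ^ n))
          * (2 * θ ^ (n + 1) * (n : ℝ) ^ n - θ * ((n : ℝ) + 1) + 1)) := by
  obtain ⟨j, rfl⟩ := hodd
  have hbound : |(∫ x in a..b, f x) - quadF a b θ (2 * j + 1) f|
      ≤ 2 * ((Γ - γ) / 2) * ∫ x in a..(a + b) / 2,
          |peanoKernel a (θ * (b - a) / 2) (2 * j + 1) x| := by
    rw [abs_sub_comm, ← peanoPairing_midpoint_eq_quadF_sub_integral θ f j hab.le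
      (fun k hk ↦ intervalIntegrable_iteratedDeriv_of_le hab.le hd hcont hint hk)
      fun k hk x hx y hy ↦ iteratedDeriv_eq_add_integral hab.le hd hcont hint hftc hk hx hy,
      ← peanoPairing_midpoint_sub_const _ ((γ + Γ) / 2) j hab.le hint]
    refine abs_peanoPairing_midpoint_le _ _ hab.le fun x hx ↦ abs_le.2 ⟨?_, ?_⟩
    · linarith [hγ x hx]
    · linarith [hΓ x hx]
  have hscale : 2 * ((b - a) / 2) ^ (2 * j + 1 + 1) / ((2 * j + 1 + 1)! : ℝ)
      = (b - a) ^ (2 * j + 1 + 1) / (((2 * j + 1 + 1)! : ℝ) * 2 ^ (2 * j + 1)) := by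
    rw [div_pow, pow_succ 2 (2 * j + 1)]
    field_simp
  rw [show (a + b) / 2 = a + (b - a) / 2 by ring, mul_div_assoc θ] at hbound
  constructor
  · intro hθn
    rw [integral_abs_peanoKernel_of_one_le a (2 * j) (by linarith) hθn] at hbound
    exact hbound.trans_eq (by rw [← hscale]; ring)
  · intro hθn
    rw [integral_abs_peanoKernel_of_lt_one a (2 * j) (by linarith) hθ.1 hθn] at hbound
    exact hbound.trans_eq (by rw [← hscale]; ring)

theorem stmt9 (a b θ : ℝ) (n : ℕ) (f : ℝ → ℝ) (γ Γ : ℝ)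
    (hab : a < b) (hθ : θ ∈ Set.Icc (0 : ℝ) 1) (hn : 1 ≤ n) (hodd : Odd n)
    (hd : ∀ k < n - 1, ∀ x ∈ Set.Icc a b,
      HasDerivAt (iteratedDeriv k f) (iteratedDeriv (k + 1) f x) x)
    (hcont : ContinuousOn (iteratedDeriv (n - 1) f) (Set.Icc a b))
    (hint : IntervalIntegrable (iteratedDeriv n f) volume a b)
    (hftc : ∀ x ∈ Set.Icc a b,
      iteratedDeriv (n - 1) f x
        = iteratedDeriv (n - 1) f a + ∫ t in a..x, iteratedDeriv n f t)
    (hγ : ∀ x ∈ Set.Icc a b, γ ≤ iteratedDeriv n f x)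
    (hΓ : ∀ x ∈ Set.Icc a b, iteratedDeriv n f x ≤ Γ) :
    (1 ≤ θ * (n : ℝ) →
      |(∫ x in a..b, f x) - quadF a b θ n f|
        ≤ (Γ - γ) / 2 * ((b - a) ^ (n + 1) / (((n + 1).factorial : ℝ) * 2 ^ n))
          * (θ * ((n : ℝ) + 1) - 1)) ∧
    (θ * (n : ℝ) < 1 →
      |(∫ x in a..b, f x) - quadF a b θ n f|
        ≤ (Γ - γ) / 2 * ((b - a) ^ (n + 1) / (((n + 1).factorial : ℝ) * 2 ^ n))
          * (2 * θ ^ (n + 1) * (n : ℝ) ^ n - θ * ((n : ℝ) + 1) + 1)) :=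
  stmt9_general a b θ n f γ Γ hab hθ hodd hd hcont hint hftc hγ hΓ
end
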